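/- arXiv:2406.00160 — 3 statements merged into one kernel-verified Lean document; each statement's English description precedes it below -/
import Mathlib

section
/- Fix t and values v_{ij,t} > 0, prices p_{j,t-1} > 0. Define φ(b) = −Σ_{i,j} b_{ij} log v_{ij,t} + Σ_j p_j log p_j with p_j = Σ_i b_{ij}, and let ℓ(b; b') = φ(b') + ⟨∇φ(b'), b − b'⟩ be its linearization. Let h(p) = Σ_j (p_j log p_j − p_j) with Bregman divergence D_h. Then for all positive bid matrices b, b' with equal row sums, φ(b) = ℓ(b; b') + D_h(p, p'), where p, p' are the column sums of b, b'. -/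
open Finset Real

/-- The Shmyrev objective: `φ(b) = −Σ_{i,j} b_{ij} log v_{ij} + Σ_j p_j log p_j`
with `p_j = Σ_i b_{ij}`. -/
noncomputable def shmyrev (N M : ℕ) (v b : Fin N → Fin M → ℝ) : ℝ :=
  -∑ i, ∑ j, b i j * Real.log (v i j) + ∑ j, (∑ i, b i j) * Real.log (∑ i, b i j)

/-- `φ(b) = ℓ(b; b') + D_h(p, p')` for the Shmyrev objective, where `ℓ` is the
linearization of `φ` at `b'` (gradient `1 − log(v_{ij}/p'_j)`) and `D_h(p,p')` is the
KL divergence between column sums. -/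
theorem stmt_3 (N M : ℕ) (v b b' : Fin N → Fin M → ℝ)
    (hv : ∀ i j, 0 < v i j) (hb : ∀ i j, 0 < b i j) (hb' : ∀ i j, 0 < b' i j)
    (hrow : ∀ i, ∑ j, b i j = ∑ j, b' i j) :
    shmyrev N M v b =
      (shmyrev N M v b' +
        ∑ i, ∑ j, (1 - Real.log (v i j / (∑ i', b' i' j))) * (b i j - b' i j)) +
      ∑ j, (∑ i, b i j) * Real.log ((∑ i, b i j) / (∑ i, b' i j)) := by
  rcases Nat.eq_zero_or_pos N with hN | hN
  · subst hN; simp [shmyrev]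
  have hne : (Finset.univ : Finset (Fin N)).Nonempty := ⟨⟨0, hN⟩, Finset.mem_univ _⟩
  have hP : ∀ j, 0 < ∑ i, b i j := fun j => Finset.sum_pos (fun i _ => hb i j) hne
  have hP' : ∀ j, 0 < ∑ i, b' i j := fun j => Finset.sum_pos (fun i _ => hb' i j) hne
  have hlog1 : ∀ i j, Real.log (v i j / ∑ i', b' i' j)
      = Real.log (v i j) - Real.log (∑ i', b' i' j) :=
    fun i j => Real.log_div (hv i j).ne' (hP' j).ne'
  have hlog2 : ∀ j, Real.log ((∑ i, b i j) / ∑ i, b' i j)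
      = Real.log (∑ i, b i j) - Real.log (∑ i, b' i j) :=
    fun j => Real.log_div (hP j).ne' (hP' j).ne'
  have hLexp : ∀ i j, (1 - (Real.log (v i j) - Real.log (∑ i', b' i' j))) * (b i j - b' i j)
      = b i j - b' i j - (b i j * Real.log (v i j) - b' i j * Real.log (v i j))
        + (Real.log (∑ i', b' i' j) * b i j - Real.log (∑ i', b' i' j) * b' i j) := by
    intros; ring
  have hDexp : ∀ j, (∑ i, b i j) * (Real.log (∑ i, b i j) - Real.log (∑ i, b' i j))
      = (∑ i, b i j) * Real.log (∑ i, b i j)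
        - Real.log (∑ i, b' i j) * (∑ i, b i j) := by
    intros; ring
  have hswap : ∀ (c : Fin N → Fin M → ℝ),
      ∑ i, ∑ j, Real.log (∑ i', b' i' j) * c i j
        = ∑ j, Real.log (∑ i, b' i j) * ∑ i, c i j := by
    intro c
    rw [Finset.sum_comm]
    exact Finset.sum_congr rfl fun j _ => (Finset.mul_sum _ _ _).symm
  have e1 : ∑ i, ∑ j, Real.log (∑ i', b' i' j) * b i j
      = ∑ j, Real.log (∑ i, b' i j) * ∑ i, b i j := hswap b
  have e2 : ∑ i, ∑ j, Real.log (∑ i', b' i' j) * b' i j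
      = ∑ j, (∑ i, b' i j) * Real.log (∑ i, b' i j) := by
    rw [hswap b']
    exact Finset.sum_congr rfl fun j _ => mul_comm _ _
  have e3 : ∑ i, ∑ j, b i j = ∑ i, ∑ j, b' i j :=
    Finset.sum_congr rfl fun i _ => hrow i
  simp only [shmyrev, hlog1, hlog2, hLexp, hDexp, Finset.sum_sub_distrib,
    Finset.sum_add_distrib]
  rw [e1, e2, e3]
  ring
end

section
/- (Relative smoothness of the Shmyrev objective) With notation as above, φ(b) ≤ ℓ(b; b') + D_h(b, b') for all positive bid matrices b, b' with equal row sums, where D_h(b,b') = Σ_{i,j} b_{ij} log(b_{ij}/b'_{ij}). -/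
open Finset Real

/-- The log-sum inequality, obtained from Jensen's inequality for the convex function
`x ↦ x log x` at the points `f i / g i` with weights `g i / ∑ g`. -/
theorem sum_mul_log_div_sum_le {ι : Type*} (s : Finset ι) (f g : ι → ℝ)
    (hf : ∀ i ∈ s, 0 ≤ f i) (hg : ∀ i ∈ s, 0 < g i) :
    (∑ i ∈ s, f i) * log ((∑ i ∈ s, f i) / ∑ i ∈ s, g i) ≤ ∑ i ∈ s, f i * log (f i / g i) := by
  rcases s.eq_empty_or_nonempty with rfl | hs
  · simp
  set B := ∑ i ∈ s, g i
  have hB : 0 < B := sum_pos hg hs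
  have jensen := convexOn_mul_log.map_sum_le (t := s) (w := fun i => g i / B)
    (p := fun i => f i / g i) (fun i hi => (div_pos (hg i hi) hB).le)
    (by rw [← sum_div, div_self hB.ne'])
    (fun i hi => Set.mem_Ici.2 (div_nonneg (hf i hi) (hg i hi).le))
  have weighted (c : ι → ℝ) :
      ∑ i ∈ s, (g i / B) • (f i / g i * c i) = (∑ i ∈ s, f i * c i) / B := by
    rw [sum_div]
    refine sum_congr rfl fun i hi => ?_
    rw [smul_eq_mul]
    field_simp [(hg i hi).ne']
  have hmean : ∑ i ∈ s, (g i / B) • (f i / g i) = (∑ i ∈ s, f i) / B := by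
    simpa using weighted 1
  rwa [hmean, weighted, div_mul_eq_mul_div, div_le_div_iff_of_pos_right hB] at jensen

/-- The error of the linearization `ℓ(b; b')` is the Bregman divergence of `x ↦ x log x` between
the column sums; the terms linear in `b - b'` cancel because the total masses agree. -/
theorem shmyrev_eq_linearization_add {N M : ℕ} (v b b' : Fin N → Fin M → ℝ)
    (hv : ∀ i j, v i j ≠ 0) (hp : ∀ j, ∑ i, b i j ≠ 0) (hp' : ∀ j, ∑ i, b' i j ≠ 0)
    (hmass : ∑ i, ∑ j, b i j = ∑ i, ∑ j, b' i j) :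
    shmyrev N M v b =
      (shmyrev N M v b' +
        ∑ i, ∑ j, (1 - log (v i j / ∑ i', b' i' j)) * (b i j - b' i j)) +
      ∑ j, (∑ i, b i j) * log ((∑ i, b i j) / ∑ i, b' i j) := by
  have hentry (i j) : (1 - log (v i j / ∑ i', b' i' j)) * (b i j - b' i j) =
      b i j - b' i j - (b i j * log (v i j) - b' i j * log (v i j)) +
        (b i j * log (∑ i', b' i' j) - b' i j * log (∑ i', b' i' j)) := by
    rw [log_div (hv i j) (hp' j)]
    ring
  have hcol (c : Fin N → Fin M → ℝ) :
      ∑ i, ∑ j, c i j * log (∑ i', b' i' j) = ∑ j, (∑ i, c i j) * log (∑ i, b' i j) := by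
    rw [sum_comm]
    simp only [sum_mul]
  simp only [shmyrev, hentry, log_div (hp _) (hp' _), mul_sub, sum_add_distrib, sum_sub_distrib,
    hcol, hmass]
  ring

/-- Relative smoothness of the Shmyrev objective:
`φ(b) ≤ ℓ(b; b') + D_h(b, b')` where `D_h(b,b') = Σ_{i,j} b_{ij} log(b_{ij}/b'_{ij})`. -/
theorem stmt_4 (N M : ℕ) (v b b' : Fin N → Fin M → ℝ)
    (hv : ∀ i j, 0 < v i j) (hb : ∀ i j, 0 < b i j) (hb' : ∀ i j, 0 < b' i j)
    (hrow : ∀ i, ∑ j, b i j = ∑ j, b' i j) :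
    shmyrev N M v b ≤
      (shmyrev N M v b' +
        ∑ i, ∑ j, (1 - Real.log (v i j / (∑ i', b' i' j))) * (b i j - b' i j)) +
      ∑ i, ∑ j, b i j * Real.log (b i j / b' i j) := by
  rcases isEmpty_or_nonempty (Fin N) with hN | hN
  · simp [shmyrev]
  have hp (j) : 0 < ∑ i, b i j := sum_pos (fun i _ => hb i j) univ_nonempty
  have hp' (j) : 0 < ∑ i, b' i j := sum_pos (fun i _ => hb' i j) univ_nonempty
  rw [shmyrev_eq_linearization_add v b b' (fun i j => (hv i j).ne') (fun j => (hp j).ne')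
    (fun j => (hp' j).ne') (sum_congr rfl fun i _ => hrow i)]
  refine add_le_add le_rfl ?_
  rw [sum_comm]
  exact sum_le_sum fun j _ =>
    sum_mul_log_div_sum_le _ (b · j) (b' · j) (fun i _ => (hb i j).le) (fun i _ => hb' i j)
end

section
/- (Mirror descent step inequality) Suppose b_t minimizes, over a convex set K, the function b ↦ ⟨g, b − b_{t−1}⟩ + D_h(b, b_{t−1}), where h is convex and differentiable on K and D_h is its Bregman divergence. Then for every b* ∈ K: ⟨g, b_t − b_{t−1}⟩ + D_h(b_t, b_{t−1}) ≤ ⟨g, b* − b_{t−1}⟩ + D_h(b*, b_{t−1}) − D_h(b*, b_t). -/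
/-!
At the minimiser `b_t`, the first-order optimality condition over the convex set `K` reads
`0 ≤ ⟪g + ∇h b_t - ∇h b_{t-1}, b* - b_t⟫`. The three-point identity
`D(c, a) - D(c, b) - D(b, a) = ⟪∇h b - ∇h a, c - b⟫` of the Bregman divergence, taken at
`(a, b, c) = (b_{t-1}, b_t, b*)`, rewrites the gradient term as
`D(b*, b_{t-1}) - D(b*, b_t) - D(b_t, b_{t-1})`, which is the claim.
-/

open InnerProductSpace

section Bregman

variable {E : Type*} [NormedAddCommGroup E] [InnerProductSpace ℝ E]

def bregmanDiv (h : E → ℝ) (gh : E → E) (x y : E) : ℝ :=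
  h x - h y - ⟪gh y, x - y⟫_ℝ

theorem bregmanDiv_three_point (h : E → ℝ) (gh : E → E) (a b c : E) :
    bregmanDiv h gh c a - bregmanDiv h gh c b - bregmanDiv h gh b a = ⟪gh b - gh a, c - b⟫_ℝ := by
  have hsplit : c - a = (c - b) + (b - a) := by abel
  simp only [bregmanDiv, hsplit, inner_add_right, inner_sub_left]
  ring

variable [CompleteSpace E]

theorem HasGradientAt.add {f g : E → ℝ} {f' g' x : E} (hf : HasGradientAt f f' x)
    (hg : HasGradientAt g g' x) : HasGradientAt (fun z => f z + g z) (f' + g') x := by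
  rw [hasGradientAt_iff_hasFDerivAt] at *
  rw [map_add]
  exact hf.add hg

theorem HasGradientAt.sub {f g : E → ℝ} {f' g' x : E} (hf : HasGradientAt f f' x)
    (hg : HasGradientAt g g' x) : HasGradientAt (fun z => f z - g z) (f' - g') x := by
  rw [hasGradientAt_iff_hasFDerivAt] at *
  rw [map_sub]
  exact hf.sub hg

theorem hasGradientAt_inner_sub (a y x : E) : HasGradientAt (fun z => ⟪a, z - y⟫_ℝ) a x := by
  rw [hasGradientAt_iff_hasFDerivAt]
  simp_rw [inner_sub_right]
  exact ((toDual ℝ E a).hasFDerivAt (x := x)).sub_const ⟪a, y⟫_ℝ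

theorem hasGradientAt_bregmanDiv_left {h : E → ℝ} {gh : E → E} {x : E}
    (hgrad : HasGradientAt h (gh x) x) (y : E) :
    HasGradientAt (fun z => bregmanDiv h gh z y) (gh x - gh y) x := by
  simpa only [bregmanDiv, sub_zero] using
    (hgrad.sub (hasGradientAt_const x (h y))).sub (hasGradientAt_inner_sub (gh y) y x)

theorem IsMinOn.inner_sub_nonneg_of_hasGradientAt {F : E → ℝ} {F' : E} {K : Set E} {x y : E}
    (hK : Convex ℝ K) (hx : x ∈ K) (hy : y ∈ K) (hmin : IsMinOn F K x)
    (hF : HasGradientAt F F' x) : 0 ≤ ⟪F', y - x⟫_ℝ := by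
  simpa using hmin.localize.hasFDerivWithinAt_nonneg
    (hasGradientAt_iff_hasFDerivAt.mp hF).hasFDerivWithinAt
    (sub_mem_posTangentConeAt_of_segment_subset (hK.segment_subset hx hy))

theorem inner_add_bregmanDiv_le_of_isMinOn {K : Set E} (hK : Convex ℝ K) {h : E → ℝ}
    {gh : E → E} {g a b c : E} (hgrad : HasGradientAt h (gh b) b) (hb : b ∈ K) (hc : c ∈ K)
    (hmin : IsMinOn (fun z => ⟪g, z - a⟫_ℝ + bregmanDiv h gh z a) K b) :
    ⟪g, b - a⟫_ℝ + bregmanDiv h gh b a ≤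
      ⟪g, c - a⟫_ℝ + bregmanDiv h gh c a - bregmanDiv h gh c b := by
  have hopt : 0 ≤ ⟪g + (gh b - gh a), c - b⟫_ℝ := hmin.inner_sub_nonneg_of_hasGradientAt hK hb hc
    ((hasGradientAt_inner_sub g a b).add (hasGradientAt_bregmanDiv_left hgrad a))
  have hsplit : c - b = (c - a) - (b - a) := by abel
  rw [inner_add_left, ← bregmanDiv_three_point, hsplit, inner_sub_right] at hopt
  linarith

end Bregman

theorem stmt_6_general (n : ℕ) (K : Set (EuclideanSpace ℝ (Fin n))) (hK : Convex ℝ K)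
    (h : EuclideanSpace ℝ (Fin n) → ℝ)
    (gh : EuclideanSpace ℝ (Fin n) → EuclideanSpace ℝ (Fin n))
    (hgrad : ∀ x, HasGradientAt h (gh x) x)
    (D : EuclideanSpace ℝ (Fin n) → EuclideanSpace ℝ (Fin n) → ℝ)
    (hD : ∀ x y, D x y = h x - h y - (inner ℝ (gh y) (x - y) : ℝ))
    (g bprev bt : EuclideanSpace ℝ (Fin n))
    (hbt : bt ∈ K)
    (hmin : ∀ b ∈ K, (inner ℝ (g) (bt - bprev) : ℝ) + D bt bprev ≤ (inner ℝ (g) (b - bprev) : ℝ) + D b bprev)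
    (bstar : EuclideanSpace ℝ (Fin n)) (hbstar : bstar ∈ K) :
    (inner ℝ (g) (bt - bprev) : ℝ) + D bt bprev ≤
      (inner ℝ (g) (bstar - bprev) : ℝ) + D bstar bprev - D bstar bt := by
  obtain rfl : D = bregmanDiv h gh := funext₂ hD
  exact inner_add_bregmanDiv_le_of_isMinOn hK (hgrad bt) hbt hbstar (isMinOn_iff.mpr hmin)

/-- Mirror descent step inequality: if `b_t` minimizes `b ↦ ⟨g, b − b_{t−1}⟩ + D_h(b, b_{t−1})`
over the convex set `K`, where `h` is a differentiable convex function with gradient `gh` and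
Bregman divergence `D`, then for every `b* ∈ K` the stated inequality holds. -/
theorem stmt_6 (n : ℕ) (K : Set (EuclideanSpace ℝ (Fin n))) (hK : Convex ℝ K)
    (h : EuclideanSpace ℝ (Fin n) → ℝ)
    (gh : EuclideanSpace ℝ (Fin n) → EuclideanSpace ℝ (Fin n))
    (hgrad : ∀ x, HasGradientAt h (gh x) x)
    (hconv : ConvexOn ℝ K h)
    (D : EuclideanSpace ℝ (Fin n) → EuclideanSpace ℝ (Fin n) → ℝ)
    (hD : ∀ x y, D x y = h x - h y - (inner ℝ (gh y) (x - y) : ℝ))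
    (g bprev bt : EuclideanSpace ℝ (Fin n))
    (hbprev : bprev ∈ K) (hbt : bt ∈ K)
    (hmin : ∀ b ∈ K, (inner ℝ (g) (bt - bprev) : ℝ) + D bt bprev ≤ (inner ℝ (g) (b - bprev) : ℝ) + D b bprev)
    (bstar : EuclideanSpace ℝ (Fin n)) (hbstar : bstar ∈ K) :
    (inner ℝ (g) (bt - bprev) : ℝ) + D bt bprev ≤
      (inner ℝ (g) (bstar - bprev) : ℝ) + D bstar bprev - D bstar bt :=
  stmt_6_general n K hK h gh hgrad D hD g bprev bt hbt hmin bstar hbstar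
end
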